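/- arXiv:2604.02527 — 2 statements merged into one kernel-verified Lean document; each statement's English description precedes it below -/
import Mathlib

section
/- Let d be a positive integer, A_0 a symmetric positive definite d×d real matrix, θ_0, θ* ∈ ℝ^d, and for s = 1,…,t let x_s ∈ ℝ^d, ξ_s ∈ ℝ, r_s = x_s^⊤ θ* + ξ_s. Define V_t = A_0 + Σ_{s=1}^t x_s x_s^⊤ and θ̂_t = V_t^{-1}(A_0 θ_0 + Σ_{s=1}^t r_s x_s). Let B_0 = ‖θ_0 − θ*‖_{A_0}, and suppose that the self-normalized noise term satisfies ‖Σ_{s=1}^t ξ_s x_s‖_{V_t^{-1}} ≤ β for some β ≥ 0. Then ‖θ̂_t − θ*‖_{V_t} ≤ β + B_0. -/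
/-!
Since `V θ* = A₀ θ* + ∑ (x_s ⬝ θ*) x_s`, the ridge error satisfies
`V (θ̂ - θ*) = A₀ (θ₀ - θ*) + ∑ ξ_s x_s`, so `‖θ̂ - θ*‖_V = ‖A₀ (θ₀ - θ*) + ∑ ξ_s x_s‖_{V⁻¹}`.
The triangle inequality for `‖·‖_{V⁻¹}` splits this into the noise term, bounded by `β`, and the
prior term, which is at most `‖θ₀ - θ*‖_{A₀}` because `A₀ ≤ V` in the Loewner order.
-/

open Matrix
open scoped MatrixOrder

noncomputable def mahalanobisNorm {n : Type*} [Fintype n] (G : Matrix n n ℝ) (v : n → ℝ) : ℝ :=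
  √(v ⬝ᵥ G *ᵥ v)

variable {m n : Type*} [Fintype m] [Fintype n]

theorem mahalanobisNorm_nonneg (G : Matrix n n ℝ) (v : n → ℝ) : 0 ≤ mahalanobisNorm G v :=
  Real.sqrt_nonneg _

theorem dotProduct_transpose_mul_self_mulVec (B : Matrix m n ℝ) (u v : n → ℝ) :
    u ⬝ᵥ (Bᵀ * B) *ᵥ v = inner ℝ (WithLp.toLp 2 (B *ᵥ u)) (WithLp.toLp 2 (B *ᵥ v)) := by
  rw [EuclideanSpace.inner_eq_star_dotProduct, ← mulVec_mulVec, dotProduct_mulVec, vecMul_transpose]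
  simp [dotProduct_comm]

theorem mahalanobisNorm_transpose_mul_self (B : Matrix m n ℝ) (v : n → ℝ) :
    mahalanobisNorm (Bᵀ * B) v = ‖WithLp.toLp 2 (B *ᵥ v)‖ := by
  rw [mahalanobisNorm, dotProduct_transpose_mul_self_mulVec, norm_eq_sqrt_real_inner]

theorem Matrix.PosSemidef.exists_eq_transpose_mul_self {M : Matrix n n ℝ} (hM : M.PosSemidef) :
    ∃ B : Matrix n n ℝ, M = Bᵀ * B := by
  classical
  simpa [star_eq_conjTranspose] using CStarAlgebra.nonneg_iff_eq_star_mul_self.mp hM.nonneg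

theorem mahalanobisNorm_add_le {M : Matrix n n ℝ} (hM : M.PosSemidef) (u v : n → ℝ) :
    mahalanobisNorm M (u + v) ≤ mahalanobisNorm M u + mahalanobisNorm M v := by
  obtain ⟨B, rfl⟩ := hM.exists_eq_transpose_mul_self
  simp only [mahalanobisNorm_transpose_mul_self, mulVec_add, WithLp.toLp_add]
  exact norm_add_le _ _

theorem dotProduct_mulVec_le_mahalanobisNorm_mul {M : Matrix n n ℝ} (hM : M.PosSemidef)
    (u v : n → ℝ) : u ⬝ᵥ M *ᵥ v ≤ mahalanobisNorm M u * mahalanobisNorm M v := by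
  obtain ⟨B, rfl⟩ := hM.exists_eq_transpose_mul_self
  rw [dotProduct_transpose_mul_self_mulVec, mahalanobisNorm_transpose_mul_self,
    mahalanobisNorm_transpose_mul_self]
  exact real_inner_le_norm _ _

theorem mahalanobisNorm_mono {A V : Matrix n n ℝ} (hAV : A ≤ V) (v : n → ℝ) :
    mahalanobisNorm A v ≤ mahalanobisNorm V v := by
  have := (Matrix.le_iff.mp hAV).dotProduct_mulVec_nonneg v
  rw [star_trivial, sub_mulVec, dotProduct_sub, sub_nonneg] at this
  exact Real.sqrt_le_sqrt this

theorem mahalanobisNorm_inv_mulVec [DecidableEq n] {V : Matrix n n ℝ} (hV : IsUnit V.det)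
    (w : n → ℝ) : mahalanobisNorm V⁻¹ (V *ᵥ w) = mahalanobisNorm V w := by
  rw [mahalanobisNorm, mahalanobisNorm, mulVec_mulVec, nonsing_inv_mul _ hV, one_mulVec,
    dotProduct_comm]

theorem mahalanobisNorm_inv_mulVec_le [DecidableEq n] {A V : Matrix n n ℝ} (hA : A.PosSemidef)
    (hAV : A ≤ V) (hV : IsUnit V.det) (e : n → ℝ) :
    mahalanobisNorm V⁻¹ (A *ᵥ e) ≤ mahalanobisNorm A e := by
  set u := V⁻¹ *ᵥ A *ᵥ e
  have hVu : V *ᵥ u = A *ᵥ e := by rw [mulVec_mulVec, mul_nonsing_inv _ hV, one_mulVec]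
  have hVpsd : V.PosSemidef := Matrix.nonneg_iff_posSemidef.mp (hA.nonneg.trans hAV)
  have hsq : mahalanobisNorm V u ^ 2 = u ⬝ᵥ A *ᵥ e := by
    rw [mahalanobisNorm, Real.sq_sqrt (by simpa using hVpsd.dotProduct_mulVec_nonneg u), hVu]
  have hle : mahalanobisNorm V u ^ 2 ≤ mahalanobisNorm V u * mahalanobisNorm A e :=
    hsq ▸ (dotProduct_mulVec_le_mahalanobisNorm_mul hA u e).trans
      (mul_le_mul_of_nonneg_right (mahalanobisNorm_mono hAV u) (mahalanobisNorm_nonneg A e))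
  rw [← hVu, mahalanobisNorm_inv_mulVec hV]
  nlinarith [mahalanobisNorm_nonneg V u, mahalanobisNorm_nonneg A e]

theorem warmStart_rhs_sub_mulVec {ι : Type*} [Fintype ι] (A : Matrix n n ℝ) (θ₀ θ : n → ℝ)
    (x : ι → n → ℝ) (ξ : ι → ℝ) :
    A *ᵥ θ₀ + ∑ s, (x s ⬝ᵥ θ + ξ s) • x s - (A + ∑ s, vecMulVec (x s) (x s)) *ᵥ θ =
      A *ᵥ (θ₀ - θ) + ∑ s, ξ s • x s := by
  simp only [add_mulVec, sum_mulVec, vecMulVec_mulVec, op_smul_eq_smul, add_smul,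
    Finset.sum_add_distrib, mulVec_sub]
  abel

theorem prior_centered_confidence_general
    (d t : ℕ)
    (A0 : Matrix (Fin d) (Fin d) ℝ) (hA0 : A0.PosDef)
    (θ0 θstar : Fin d → ℝ)
    (x : Fin t → Fin d → ℝ) (ξ : Fin t → ℝ)
    (r : Fin t → ℝ) (hr : ∀ s, r s = x s ⬝ᵥ θstar + ξ s)
    (V : Matrix (Fin d) (Fin d) ℝ)
    (hV : V = A0 + ∑ s, vecMulVec (x s) (x s))
    (θhat : Fin d → ℝ)
    (hθhat : θhat = V⁻¹ *ᵥ (A0 *ᵥ θ0 + ∑ s, r s • x s))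
    (B0 : ℝ)
    (hB0 : B0 = Real.sqrt ((θ0 - θstar) ⬝ᵥ A0 *ᵥ (θ0 - θstar)))
    (β : ℝ)
    (hβ : Real.sqrt ((∑ s, ξ s • x s) ⬝ᵥ V⁻¹ *ᵥ (∑ s, ξ s • x s)) ≤ β) :
    Real.sqrt ((θhat - θstar) ⬝ᵥ V *ᵥ (θhat - θstar)) ≤ β + B0 := by
  have hsum : (∑ s, vecMulVec (x s) (x s)).PosSemidef :=
    posSemidef_sum _ fun s _ => by simpa using posSemidef_vecMulVec_self_star (x s)
  have hVpd : V.PosDef := hV ▸ hA0.add_posSemidef hsum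
  have hA0V : A0 ≤ V := hV ▸ le_add_of_nonneg_right hsum.nonneg
  have hVdet : IsUnit V.det := (isUnit_iff_isUnit_det V).mp hVpd.isUnit
  have hres : V *ᵥ (θhat - θstar) = A0 *ᵥ (θ0 - θstar) + ∑ s, ξ s • x s := by
    rw [mulVec_sub, hθhat, mulVec_mulVec, mul_nonsing_inv _ hVdet, one_mulVec, hV]
    simp only [hr, warmStart_rhs_sub_mulVec]
  calc mahalanobisNorm V (θhat - θstar)
      = mahalanobisNorm V⁻¹ (A0 *ᵥ (θ0 - θstar) + ∑ s, ξ s • x s) := by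
        rw [← hres, mahalanobisNorm_inv_mulVec hVdet]
    _ ≤ mahalanobisNorm V⁻¹ (A0 *ᵥ (θ0 - θstar)) + mahalanobisNorm V⁻¹ (∑ s, ξ s • x s) :=
        mahalanobisNorm_add_le hVpd.inv.posSemidef _ _
    _ ≤ B0 + β := add_le_add (hB0 ▸ mahalanobisNorm_inv_mulVec_le hA0.posSemidef hA0V hVdet _) hβ
    _ = β + B0 := add_comm _ _

/-- Deterministic core of the prior-centered confidence inequality:
if the self-normalized noise term is at most `β`, then
`‖θ̂_t − θ*‖_{V_t} ≤ β + B_0` with `B_0 = ‖θ_0 − θ*‖_{A_0}`. -/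
theorem prior_centered_confidence
    (d t : ℕ) (hd : 0 < d)
    (A0 : Matrix (Fin d) (Fin d) ℝ) (hA0 : A0.PosDef)
    (θ0 θstar : Fin d → ℝ)
    (x : Fin t → Fin d → ℝ) (ξ : Fin t → ℝ)
    (r : Fin t → ℝ) (hr : ∀ s, r s = x s ⬝ᵥ θstar + ξ s)
    (V : Matrix (Fin d) (Fin d) ℝ)
    (hV : V = A0 + ∑ s, vecMulVec (x s) (x s))
    (θhat : Fin d → ℝ)
    (hθhat : θhat = V⁻¹ *ᵥ (A0 *ᵥ θ0 + ∑ s, r s • x s))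
    (B0 : ℝ)
    (hB0 : B0 = Real.sqrt ((θ0 - θstar) ⬝ᵥ A0 *ᵥ (θ0 - θstar)))
    (β : ℝ) (hβ0 : 0 ≤ β)
    (hβ : Real.sqrt ((∑ s, ξ s • x s) ⬝ᵥ V⁻¹ *ᵥ (∑ s, ξ s • x s)) ≤ β) :
    Real.sqrt ((θhat - θstar) ⬝ᵥ V *ᵥ (θhat - θstar)) ≤ β + B0 :=
  prior_centered_confidence_general d t A0 hA0 θ0 θstar x ξ r hr V hV θhat hθhat B0 hB0 β hβ
end

section
/- Let X be a real n×d matrix with eigendecomposition X^⊤X = U Λ U^⊤, U orthogonal, Λ = diag(λ_1,…,λ_d), λ_i ≥ 0 for all i, and let τ > 0 and p ∈ ℝ. Define A_0 = X^⊤X + τ·I and M = A_0^{-1}X^⊤X, and let θ* ∈ ℝ^d with rotated coordinates θ*_U = U^⊤θ*. Then ‖((1 − 2p)·M − I)θ*‖_{A_0}² = Σ_{i=1}^d ((τ + 2p·λ_i)² / (λ_i + τ)) · (θ*_{U,i})². -/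
open Matrix BigOperators

/-- Direction-wise expression of the deterministic flip-bias term:
`‖((1 − 2p)M − I)θ*‖_{A_0}² = ∑ᵢ ((τ + 2pλᵢ)²/(λᵢ + τ)) (θ*_{U,i})²`. -/
theorem flip_bias_eigen_expansion
    (n d : ℕ)
    (X : Matrix (Fin n) (Fin d) ℝ)
    (U : Matrix (Fin d) (Fin d) ℝ) (hU : Uᵀ * U = 1)
    (lam : Fin d → ℝ) (hlam : ∀ i, 0 ≤ lam i)
    (hX : Xᵀ * X = U * diagonal lam * Uᵀ)
    (τ : ℝ) (hτ : 0 < τ) (p : ℝ)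
    (A0 : Matrix (Fin d) (Fin d) ℝ) (hA0 : A0 = Xᵀ * X + τ • 1)
    (M : Matrix (Fin d) (Fin d) ℝ) (hM : M = A0⁻¹ * (Xᵀ * X))
    (θstar : Fin d → ℝ)
    (θU : Fin d → ℝ) (hθU : θU = Uᵀ *ᵥ θstar) :
    Real.sqrt ((((1 - 2 * p) • M - 1) *ᵥ θstar) ⬝ᵥ
        A0 *ᵥ (((1 - 2 * p) • M - 1) *ᵥ θstar)) ^ 2
      = ∑ i, (τ + 2 * p * lam i) ^ 2 / (lam i + τ) * (θU i) ^ 2 := by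
  have hUU : U * Uᵀ = 1 := mul_eq_one_comm.mp hU
  have hne : ∀ i, lam i + τ ≠ 0 := fun i => by have := hlam i; positivity
  -- A0 as eigendecomposition
  have hτ1 : (τ • 1 : Matrix (Fin d) (Fin d) ℝ) = U * diagonal (fun _ => τ) * Uᵀ := by
    have h : (diagonal (fun _ => τ) : Matrix (Fin d) (Fin d) ℝ) = τ • 1 := by
      ext i j
      rcases eq_or_ne i j with h | h
      · subst h; simp
      · simp [diagonal_apply_ne _ h, Matrix.one_apply_ne h]
    rw [h, Matrix.mul_smul, Matrix.smul_mul, mul_one, hUU]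
  have hA0' : A0 = U * diagonal (fun i => lam i + τ) * Uᵀ := by
    rw [hA0, hX, hτ1, ← add_mul, ← mul_add, diagonal_add]
  -- inverse of A0
  have hA0inv : A0⁻¹ = U * diagonal (fun i => (lam i + τ)⁻¹) * Uᵀ := by
    apply inv_eq_right_inv
    rw [hA0']
    calc U * diagonal (fun i => lam i + τ) * Uᵀ * (U * diagonal (fun i => (lam i + τ)⁻¹) * Uᵀ)
        = U * diagonal (fun i => lam i + τ) * (Uᵀ * U) * diagonal (fun i => (lam i + τ)⁻¹) * Uᵀ := by
          simp only [Matrix.mul_assoc]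
      _ = U * (diagonal (fun i => lam i + τ) * diagonal (fun i => (lam i + τ)⁻¹)) * Uᵀ := by
          rw [hU]; simp only [Matrix.mul_assoc, Matrix.one_mul]
      _ = 1 := by
          rw [diagonal_mul_diagonal]
          have h : (fun i => (lam i + τ) * (lam i + τ)⁻¹) = fun _ => (1:ℝ) := by
            funext i; exact mul_inv_cancel₀ (hne i)
          rw [h, diagonal_one, Matrix.mul_one, hUU]
  -- B := (1-2p) • M - 1 as eigendecomposition
  set f : Fin d → ℝ := fun i => (1 - 2 * p) * ((lam i + τ)⁻¹ * lam i) - 1 with hf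
  have hMdiag : M = U * diagonal (fun i => (lam i + τ)⁻¹ * lam i) * Uᵀ := by
    rw [hM, hA0inv, hX]
    calc U * diagonal (fun i => (lam i + τ)⁻¹) * Uᵀ * (U * diagonal lam * Uᵀ)
        = U * (diagonal (fun i => (lam i + τ)⁻¹) * (Uᵀ * U) * diagonal lam) * Uᵀ := by
          simp only [Matrix.mul_assoc]
      _ = U * diagonal (fun i => (lam i + τ)⁻¹ * lam i) * Uᵀ := by
          rw [hU, Matrix.mul_one, diagonal_mul_diagonal]
  have hB : (1 - 2 * p) • M - 1 = U * diagonal f * Uᵀ := by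
    rw [hMdiag]
    have h : diagonal f
        = (1 - 2 * p) • diagonal (fun i => (lam i + τ)⁻¹ * lam i)
          - (1 : Matrix (Fin d) (Fin d) ℝ) := by
      ext i j
      rcases eq_or_ne i j with h | h
      · subst h; simp [hf]
      · simp [diagonal_apply_ne _ h, Matrix.one_apply_ne h]
    rw [h, Matrix.mul_sub, Matrix.sub_mul, Matrix.mul_smul, Matrix.smul_mul,
      Matrix.mul_one, hUU]
  -- moving matrices of the form U D Uᵀ through mulVec
  have hdg : ∀ (g a : Fin d → ℝ), diagonal g *ᵥ a = fun i => g i * a i := by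
    intro g a
    funext i
    simp [Matrix.mulVec_diagonal]
  have hstep : ∀ g : Fin d → ℝ,
      (U * diagonal g * Uᵀ) *ᵥ θstar = U *ᵥ (fun i => g i * θU i) := by
    intro g
    rw [Matrix.mul_assoc, ← Matrix.mulVec_mulVec, ← Matrix.mulVec_mulVec, ← hθU, hdg]
  have hstep2 : ∀ (g a : Fin d → ℝ),
      (U * diagonal g * Uᵀ) *ᵥ (U *ᵥ a) = U *ᵥ (fun i => g i * a i) := by
    intro g a
    rw [Matrix.mulVec_mulVec]
    simp only [Matrix.mul_assoc, hU, Matrix.mul_one]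
    rw [← Matrix.mulVec_mulVec, hdg]
  have hdot : ∀ a b : Fin d → ℝ, (U *ᵥ a) ⬝ᵥ (U *ᵥ b) = a ⬝ᵥ b := by
    intro a b
    rw [Matrix.dotProduct_mulVec, ← Matrix.mulVec_transpose, Matrix.mulVec_mulVec, hU,
      Matrix.one_mulVec]
  -- the quadratic form
  have key : (((1 - 2 * p) • M - 1) *ᵥ θstar) ⬝ᵥ A0 *ᵥ (((1 - 2 * p) • M - 1) *ᵥ θstar)
      = ∑ i, (τ + 2 * p * lam i) ^ 2 / (lam i + τ) * (θU i) ^ 2 := by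
    rw [hB, hA0', hstep, hstep2, hdot]
    unfold dotProduct
    apply Finset.sum_congr rfl
    intro i _
    have h := hne i
    simp only [hf]
    field_simp
    ring
  rw [key]
  have hnn : 0 ≤ ∑ i, (τ + 2 * p * lam i) ^ 2 / (lam i + τ) * (θU i) ^ 2 := by
    apply Finset.sum_nonneg
    intro i _
    have h1 : 0 < lam i + τ := by have := hlam i; positivity
    positivity
  rw [Real.sq_sqrt hnn]
end
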